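/- Let L : ℝⁿ × ℝⁿ → ℝ be a smooth Lagrangian, G a canonical semispray coefficient family for L, and N^j_i = ∂Gʲ/∂yⁱ. If the semispray derivative S(L) = Σ_j yʲ ∂L/∂xʲ − 2 Σ_j Gʲ ∂L/∂yʲ vanishes identically on ℝⁿ × ℝⁿ, then the horizontal derivative vanishes identically: δL/δxⁱ = ∂L/∂xⁱ − Σ_j N^j_i ∂L/∂yʲ = 0 for all i and all points. In other words, if L is constant along the integral curves of the canonical semispray (solutions of the Euler–Lagrange equations), then it is constant along the horizontal curves of the canonical nonlinear connection: S(L) = 0 implies d_hL = 0. -/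

import Mathlib

open scoped ContDiff

/-- The tangent bundle of `ℝⁿ`, identified with `ℝⁿ × ℝⁿ` (base coordinates `x`,
fibre coordinates `y`). -/
abbrev TM (n : ℕ) := (Fin n → ℝ) × (Fin n → ℝ)

/-- Partial derivative of `F` in the `i`-th base coordinate `xⁱ`. -/
noncomputable def pdx {n : ℕ} (F : TM n → ℝ) (i : Fin n) (p : TM n) : ℝ :=
  fderiv ℝ F p (Pi.single i 1, 0)

/-- Partial derivative of `F` in the `i`-th fibre coordinate `yⁱ`. -/
noncomputable def pdy {n : ℕ} (F : TM n → ℝ) (i : Fin n) (p : TM n) : ℝ :=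
  fderiv ℝ F p (0, Pi.single i 1)

/-- The metric tensor `g_ij = ½ ∂²L/∂yⁱ∂yʲ` of a Lagrangian `L`. -/
noncomputable def gmetric {n : ℕ} (L : TM n → ℝ) (i j : Fin n) (p : TM n) : ℝ :=
  (1 / 2) * pdy (pdy L j) i p

/-- `G` is a canonical semispray coefficient family for `L`:
`G` is smooth and `4 Σ_k g_ik Gᵏ = Σ_h yʰ ∂²L/∂xʰ∂yⁱ − ∂L/∂xⁱ` at every point. -/
def IsSemisprayFamily {n : ℕ} (L : TM n → ℝ) (G : TM n → Fin n → ℝ) : Prop :=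
  ContDiff ℝ ∞ G ∧ ∀ (p : TM n) (i : Fin n),
    4 * ∑ k, gmetric L i k p * G p k = ∑ h, p.2 h * pdx (pdy L i) h p - pdx L i p

/-- Canonical nonlinear connection coefficients `N^j_i = ∂Gʲ/∂yⁱ`. -/
noncomputable def Ncoef {n : ℕ} (G : TM n → Fin n → ℝ) (j i : Fin n) (p : TM n) : ℝ :=
  pdy (fun q => G q j) i p

/-- The semispray derivative `S(F) = Σ_j yʲ ∂F/∂xʲ − 2 Σ_j Gʲ ∂F/∂yʲ`. -/
noncomputable def sprayDeriv {n : ℕ} (F : TM n → ℝ) (G : TM n → Fin n → ℝ) (p : TM n) : ℝ :=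
  ∑ j, p.2 j * pdx F j p - 2 * ∑ j, G p j * pdy F j p

/-- The horizontal derivative `δL/δxⁱ = ∂L/∂xⁱ − Σ_j N^j_i ∂L/∂yʲ`, where
`N^j_i = ∂Gʲ/∂yⁱ` are the canonical nonlinear connection coefficients. -/
noncomputable def hderiv {n : ℕ} (L : TM n → ℝ) (G : TM n → Fin n → ℝ) (i : Fin n)
    (p : TM n) : ℝ :=
  pdx L i p - ∑ j, Ncoef G j i p * pdy L j p

/-! Differentiate the identity `S(L) = 0` in the fibre direction `∂/∂yⁱ`. By the product rule
this gives `∂L/∂xⁱ + Σ yʲ ∂²L/∂yⁱ∂xʲ − 2 Σ N^j_i ∂L/∂yʲ − 2 Σ Gʲ ∂²L/∂yⁱ∂yʲ = 0`. The semispray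
equation rewrites the last sum as `Σ yʰ ∂²L/∂xʰ∂yⁱ − ∂L/∂xⁱ`, which by symmetry of second
derivatives cancels the `y`-weighted term, so `∂S(L)/∂yⁱ = 2 δL/δxⁱ`. -/

section SecondDerivatives

variable {E F : Type*} [NormedAddCommGroup E] [NormedSpace ℝ E]
  [NormedAddCommGroup F] [NormedSpace ℝ F]

theorem ContDiff.differentiable_fderiv_apply {f : E → F} (hf : ContDiff ℝ 2 f) (v : E) :
    Differentiable ℝ (fun x => fderiv ℝ f x v) :=
  ((hf.fderiv_right (m := 1) le_rfl).clm_apply contDiff_const).differentiable one_ne_zero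

theorem ContDiff.fderiv_fderiv_apply_comm {f : E → F} (hf : ContDiff ℝ 2 f) (x v w : E) :
    fderiv ℝ (fun y => fderiv ℝ f y v) x w = fderiv ℝ (fun y => fderiv ℝ f y w) x v := by
  have hdf : DifferentiableAt ℝ (fderiv ℝ f) x :=
    (hf.fderiv_right (m := 1) le_rfl).differentiable one_ne_zero x
  rw [fderiv_clm_apply hdf (differentiableAt_const v), fderiv_clm_apply hdf (differentiableAt_const w)]
  simpa using (hf.contDiffAt.isSymmSndFDerivAt (x := x) (by simp)).eq w v

end SecondDerivatives

section PartialDerivatives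

variable {n : ℕ} {f g : TM n → ℝ} {p : TM n}

theorem differentiable_pdx (hf : ContDiff ℝ 2 f) (i : Fin n) : Differentiable ℝ (pdx f i) :=
  hf.differentiable_fderiv_apply _

theorem differentiable_pdy (hf : ContDiff ℝ 2 f) (i : Fin n) : Differentiable ℝ (pdy f i) :=
  hf.differentiable_fderiv_apply _

theorem pdy_pdx_comm (hf : ContDiff ℝ 2 f) (i j : Fin n) (p : TM n) :
    pdy (pdx f j) i p = pdx (pdy f i) j p :=
  hf.fderiv_fderiv_apply_comm p _ _

theorem pdy_snd_apply (i j : Fin n) (p : TM n) :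
    pdy (fun q : TM n => q.2 j) i p = (Pi.single i 1 : Fin n → ℝ) j := by
  have : (fun q : TM n => q.2 j) =
      (ContinuousLinearMap.proj j).comp (ContinuousLinearMap.snd ℝ (Fin n → ℝ) (Fin n → ℝ)) :=
    rfl
  rw [pdy, this, ContinuousLinearMap.fderiv]
  rfl

theorem pdy_const (c : ℝ) (i : Fin n) (p : TM n) : pdy (fun _ => c) i p = 0 := by
  simp [pdy]

theorem pdy_sub (hf : DifferentiableAt ℝ f p) (hg : DifferentiableAt ℝ g p) (i : Fin n) :
    pdy (fun q => f q - g q) i p = pdy f i p - pdy g i p := by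
  simp [pdy, fderiv_fun_sub hf hg]

theorem pdy_const_mul (hf : DifferentiableAt ℝ f p) (c : ℝ) (i : Fin n) :
    pdy (fun q => c * f q) i p = c * pdy f i p := by
  simp [pdy, fderiv_const_mul hf]

theorem pdy_mul (hf : DifferentiableAt ℝ f p) (hg : DifferentiableAt ℝ g p) (i : Fin n) :
    pdy (fun q => f q * g q) i p = pdy f i p * g p + f p * pdy g i p := by
  simp only [pdy, fderiv_fun_mul hf hg, add_apply, smul_apply, smul_eq_mul]
  ring

theorem pdy_sum {ι : Type*} (s : Finset ι) {F : ι → TM n → ℝ}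
    (hF : ∀ k ∈ s, DifferentiableAt ℝ (F k) p) (i : Fin n) :
    pdy (fun q => ∑ k ∈ s, F k q) i p = ∑ k ∈ s, pdy (F k) i p := by
  simp [pdy, fderiv_fun_sum hF]

end PartialDerivatives

section Spray

variable {n : ℕ} {L : TM n → ℝ} {G : TM n → Fin n → ℝ}

theorem pdy_sprayDeriv (hL : ContDiff ℝ 2 L) (hG : ∀ j, Differentiable ℝ (fun q => G q j))
    (i : Fin n) (p : TM n) :
    pdy (sprayDeriv L G) i p = pdx L i p + ∑ j, p.2 j * pdy (pdx L j) i p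
      - 2 * ∑ j, (Ncoef G j i p * pdy L j p + G p j * pdy (pdy L j) i p) := by
  have hy : ∀ j, DifferentiableAt ℝ (fun q : TM n => q.2 j) p := fun j => by fun_prop
  have hyx : ∀ j, DifferentiableAt ℝ (fun q : TM n => q.2 j * pdx L j q) p := fun j =>
    (hy j).mul (differentiable_pdx hL j p)
  have hGy : ∀ j, DifferentiableAt ℝ (fun q => G q j * pdy L j q) p := fun j =>
    (hG j p).mul (differentiable_pdy hL j p)
  have hsum_yx : ∑ j, pdy (fun q : TM n => q.2 j * pdx L j q) i p
      = pdx L i p + ∑ j, p.2 j * pdy (pdx L j) i p := by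
    simp [pdy_mul (hy _) (differentiable_pdx hL _ p), pdy_snd_apply, Finset.sum_add_distrib,
      Pi.single_apply]
  have hsum_Gy : ∑ j, pdy (fun q => G q j * pdy L j q) i p
      = ∑ j, (Ncoef G j i p * pdy L j p + G p j * pdy (pdy L j) i p) := by
    simp [pdy_mul (hG _ p) (differentiable_pdy hL _ p), Ncoef]
  unfold sprayDeriv
  rw [pdy_sub (.fun_sum fun j _ => hyx j)
    ((DifferentiableAt.fun_sum fun j _ => hGy j).const_mul 2), pdy_const_mul
    (.fun_sum fun j _ => hGy j), pdy_sum _ (fun j _ => hyx j), pdy_sum _ (fun j _ => hGy j),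
    hsum_yx, hsum_Gy]

theorem pdy_sprayDeriv_eq_two_mul_hderiv (hL : ContDiff ℝ 2 L) (hG : IsSemisprayFamily L G)
    (i : Fin n) (p : TM n) :
    pdy (sprayDeriv L G) i p = 2 * hderiv L G i p := by
  have hGdiff : ∀ j, Differentiable ℝ (fun q => G q j) := fun j =>
    (contDiff_pi.mp hG.1 j).differentiable (by simp)
  have hmetric : ∑ j, G p j * pdy (pdy L j) i p = 2 * ∑ k, gmetric L i k p * G p k := by
    simp only [gmetric, Finset.mul_sum]
    exact Finset.sum_congr rfl fun j _ => by ring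
  rw [pdy_sprayDeriv hL hGdiff, hderiv, Finset.sum_add_distrib, hmetric]
  simp only [pdy_pdx_comm hL]
  linarith [hG.2 p i]

end Spray

/-- if `L` is constant along the integral curves of the canonical
semispray, i.e. `S(L) = 0` identically, then `L` is constant along the horizontal
curves of the canonical nonlinear connection: `d_hL = 0`. -/
theorem horizontal_deriv_vanishes_of_spray_deriv_vanishes (n : ℕ)
    (L : TM n → ℝ) (hL : ContDiff ℝ ∞ L)
    (G : TM n → Fin n → ℝ) (hG : IsSemisprayFamily L G)
    (hSL : ∀ p : TM n, sprayDeriv L G p = 0) :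
    ∀ (i : Fin n) (p : TM n), hderiv L G i p = 0 := by
  intro i p
  have hS : sprayDeriv L G = fun _ => 0 := funext hSL
  have h := pdy_sprayDeriv_eq_two_mul_hderiv (hL.of_le (by decide)) hG i p
  rw [hS, pdy_const] at h
  linarith
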